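/- arXiv:1504.06516 — 10 statements merged into one kernel-verified Lean document; each statement's English description precedes it below -/
import Mathlib

section
/- Let n₁, n₂ ∈ ℝ² be linearly independent vectors and set C₁ = n₁ ⊗ n₁ and C₂ = n₂ ⊗ n₂ (rank-one 2×2 matrices). Suppose ν₊₊, ν₊₋, ν₋₊, ν₋₋ are nonnegative reals with ν₊₊ + ν₊₋ + ν₋₊ + ν₋₋ = 1, satisfying the moment conditions ν₊₊(C₁+C₂) + ν₊₋(C₁−C₂) + ν₋₊(−C₁+C₂) + ν₋₋(−C₁−C₂) = 0 (as a matrix equation) and ν₊₊·det(C₁+C₂) + ν₊₋·det(C₁−C₂) + ν₋₊·det(−C₁+C₂) + ν₋₋·det(−C₁−C₂) = 0. Then ν₊₊ = ν₊₋ = ν₋₊ = ν₋₋ = 1/4. -/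
open Matrix

/-! Write `C₁ = n₁ ⊗ n₁`, `C₂ = n₂ ⊗ n₂`. The first moment condition reads
`(νpp + νpm - νmp - νmm) C₁ + (νpp - νpm + νmp - νmm) C₂ = 0`, and `C₁`, `C₂` are linearly
independent, since row `i` of `s C₁ + t C₂` is `(s n₁ᵢ) n₁ + (t n₂ᵢ) n₂`. In dimension two
`det (s C₁ + t C₂) = s t det[n₁, n₂]²`, so the determinant condition reads
`(νpp - νpm - νmp + νmm) det[n₁, n₂]² = 0`. Together with the total mass this is an invertible
linear system for the four weights. -/

theorem LinearIndependent.vecMulVec_self_pair {R n : Type*} [Ring R] {u v : n → R}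
    (h : LinearIndependent R ![u, v]) :
    LinearIndependent R ![vecMulVec u u, vecMulVec v v] := by
  rw [LinearIndependent.pair_iff] at h ⊢
  intro s t hst
  have hrow : ∀ i, s * u i = 0 ∧ t * v i = 0 := fun i ↦ h _ _ <| by
    ext j
    simpa [vecMulVec_apply, mul_assoc] using congrFun (congrFun hst i) j
  refine h s t ?_
  have hsu : s • u = 0 := funext fun i ↦ (hrow i).1
  have htv : t • v = 0 := funext fun i ↦ (hrow i).2
  rw [hsu, htv, add_zero]

theorem det_smul_vecMulVec_add_smul_vecMulVec {R : Type*} [CommRing R] (u v : Fin 2 → R)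
    (s t : R) : (s • vecMulVec u u + t • vecMulVec v v).det = s * t * (of ![u, v]).det ^ 2 := by
  simp only [det_fin_two, Matrix.add_apply, Matrix.smul_apply, vecMulVec_apply, of_apply,
    smul_eq_mul, cons_val_zero, cons_val_one]
  ring

theorem weights_quarter_of_moment_conditions_general
    (n₁ n₂ : Fin 2 → ℝ) (hind : LinearIndependent ℝ ![n₁, n₂])
    (νpp νpm νmp νmm : ℝ)
    (hsum : νpp + νpm + νmp + νmm = 1)
    (hbary : νpp • (vecMulVec n₁ n₁ + vecMulVec n₂ n₂)
           + νpm • (vecMulVec n₁ n₁ - vecMulVec n₂ n₂)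
           + νmp • (-vecMulVec n₁ n₁ + vecMulVec n₂ n₂)
           + νmm • (-vecMulVec n₁ n₁ - vecMulVec n₂ n₂) = 0)
    (hdet : νpp * (vecMulVec n₁ n₁ + vecMulVec n₂ n₂).det
          + νpm * (vecMulVec n₁ n₁ - vecMulVec n₂ n₂).det
          + νmp * (-vecMulVec n₁ n₁ + vecMulVec n₂ n₂).det
          + νmm * (-vecMulVec n₁ n₁ - vecMulVec n₂ n₂).det = 0) :
    νpp = 1/4 ∧ νpm = 1/4 ∧ νmp = 1/4 ∧ νmm = 1/4 := by
  obtain ⟨ha, hb⟩ := LinearIndependent.pair_iff.1 hind.vecMulVec_self_pair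
    (νpp + νpm - νmp - νmm) (νpp - νpm + νmp - νmm) (by rw [← hbary]; module)
  have hD : (of ![n₁, n₂]).det ≠ 0 := by
    rwa [← isUnit_iff_ne_zero, ← isUnit_iff_isUnit_det, ← linearIndependent_rows_iff_isUnit]
  have hc : (νpp - νpm - νmp + νmm) * (of ![n₁, n₂]).det ^ 2 = 0 := by
    have key := det_smul_vecMulVec_add_smul_vecMulVec n₁ n₂
    calc (νpp - νpm - νmp + νmm) * (of ![n₁, n₂]).det ^ 2
        = νpp * ((1 : ℝ) • vecMulVec n₁ n₁ + (1 : ℝ) • vecMulVec n₂ n₂).det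
          + νpm * ((1 : ℝ) • vecMulVec n₁ n₁ + (-1 : ℝ) • vecMulVec n₂ n₂).det
          + νmp * ((-1 : ℝ) • vecMulVec n₁ n₁ + (1 : ℝ) • vecMulVec n₂ n₂).det
          + νmm * ((-1 : ℝ) • vecMulVec n₁ n₁ + (-1 : ℝ) • vecMulVec n₂ n₂).det := by
          simp only [key]; ring
      _ = 0 := by simpa only [one_smul, neg_smul, ← sub_eq_add_neg] using hdet
  have hc0 := (mul_eq_zero.1 hc).resolve_right (pow_ne_zero 2 hD)
  exact ⟨by linarith, by linarith, by linarith, by linarith⟩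

/-- For `N = 2` with independent frequencies, the moment conditions force
all four weights to equal `1/4`. -/
theorem weights_quarter_of_moment_conditions
    (n₁ n₂ : Fin 2 → ℝ) (hind : LinearIndependent ℝ ![n₁, n₂])
    (νpp νpm νmp νmm : ℝ)
    (hpp : 0 ≤ νpp) (hpm : 0 ≤ νpm) (hmp : 0 ≤ νmp) (hmm : 0 ≤ νmm)
    (hsum : νpp + νpm + νmp + νmm = 1)
    (hbary : νpp • (vecMulVec n₁ n₁ + vecMulVec n₂ n₂)
           + νpm • (vecMulVec n₁ n₁ - vecMulVec n₂ n₂)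
           + νmp • (-vecMulVec n₁ n₁ + vecMulVec n₂ n₂)
           + νmm • (-vecMulVec n₁ n₁ - vecMulVec n₂ n₂) = 0)
    (hdet : νpp * (vecMulVec n₁ n₁ + vecMulVec n₂ n₂).det
          + νpm * (vecMulVec n₁ n₁ - vecMulVec n₂ n₂).det
          + νmp * (-vecMulVec n₁ n₁ + vecMulVec n₂ n₂).det
          + νmm * (-vecMulVec n₁ n₁ - vecMulVec n₂ n₂).det = 0) :
    νpp = 1/4 ∧ νpm = 1/4 ∧ νmp = 1/4 ∧ νmm = 1/4 :=
  weights_quarter_of_moment_conditions_general n₁ n₂ hind νpp νpm νmp νmm hsum hbary hdet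
end

section
/- Let h : ℝ → ℝ be the 2-periodic function with h(t) = 1 for t ∈ [0,1) and h(t) = −1 for t ∈ [1,2). Let k, l be odd positive integers and let c ∈ (0,1). Then ∫₀¹∫₀¹ h(k·x₁ + l·x₂ + c) dx₁ dx₂ = 2c(c−1)/(kl). -/
open MeasureTheory intervalIntegral

/-- Explicit square wave. -/
noncomputable def sqw : ℝ → ℝ := fun t => if Int.fract (t / 2) < 1 / 2 then 1 else -1

lemma sqw_pos {t : ℝ} (ht : t ∈ Set.Ico (0:ℝ) 1) : sqw t = 1 := by
  have hf : Int.fract (t / 2) = t / 2 :=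
    Int.fract_eq_self.mpr ⟨by linarith [ht.1], by linarith [ht.2]⟩
  simp only [sqw, hf, if_pos (by linarith [ht.2] : t / 2 < 1 / 2)]

lemma sqw_neg {t : ℝ} (ht : t ∈ Set.Ico (1:ℝ) 2) : sqw t = -1 := by
  have hf : Int.fract (t / 2) = t / 2 :=
    Int.fract_eq_self.mpr ⟨by linarith [ht.1], by linarith [ht.2]⟩
  simp only [sqw, hf, if_neg (by push_neg; linarith [ht.1] : ¬ t / 2 < 1 / 2)]

lemma sqw_periodic : Function.Periodic sqw 2 := by
  intro t
  have : (t + 2) / 2 = t / 2 + 1 := by ring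
  simp [sqw, this, Int.fract_add_one]

lemma sqw_anti (t : ℝ) : sqw (t + 1) = - sqw t := by
  have h0 := Int.fract_nonneg (t / 2)
  have h1 := Int.fract_lt_one (t / 2)
  have hsplit : (t + 1) / 2 = (⌊t / 2⌋ : ℝ) + (Int.fract (t / 2) + 1 / 2) := by
    have := Int.floor_add_fract (t / 2)
    push_cast at this ⊢
    linarith
  have key : Int.fract ((t + 1) / 2)
      = if Int.fract (t / 2) < 1 / 2 then Int.fract (t / 2) + 1 / 2
        else Int.fract (t / 2) - 1 / 2 := by
    rw [hsplit, Int.fract_intCast_add]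
    split
    · exact Int.fract_eq_self.mpr ⟨by linarith, by linarith⟩
    · have heq : Int.fract (t / 2) + 1 / 2 = 1 + (Int.fract (t / 2) - 1 / 2) := by ring
      rw [heq]
      rw [show (1 : ℝ) + (Int.fract (t / 2) - 1 / 2) = ((1 : ℤ) : ℝ) + (Int.fract (t / 2) - 1 / 2) by norm_num,
        Int.fract_intCast_add]
      exact Int.fract_eq_self.mpr ⟨by linarith, by linarith⟩
  simp only [sqw, key]
  by_cases hc : Int.fract (t / 2) < 1 / 2
  · rw [if_pos hc, if_neg (by push_neg; linarith), if_pos hc]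
  · rw [if_neg hc, if_pos (by push_neg at hc; linarith), if_neg hc]; norm_num

lemma sqw_measurable : Measurable sqw := by
  unfold sqw
  exact Measurable.ite (measurableSet_lt ((measurable_id.div_const 2).fract)
    measurable_const) measurable_const measurable_const

lemma sqw_ii (a b : ℝ) : IntervalIntegrable sqw volume a b := by
  refine IntervalIntegrable.mono_fun' (g := fun _ => (1:ℝ)) intervalIntegrable_const
    (sqw_measurable.aestronglyMeasurable.restrict) ?_
  filter_upwards with t
  simp only [sqw]
  split <;> simp

/-- a.e. points differ from a given point -/
lemma ae_ne_pt (a : ℝ) : ∀ᵐ x : ℝ, x ≠ a := by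
  rw [MeasureTheory.ae_iff]
  simpa using Real.volume_singleton (a := a)

lemma integral_sqw_pos {a b : ℝ} (hab : a ≤ b) (ha : 0 ≤ a) (hb : b ≤ 1) :
    (∫ x in a..b, sqw x) = b - a := by
  rw [show (∫ x in a..b, sqw x) = ∫ x in a..b, (1:ℝ) from ?_]
  · simp
  apply intervalIntegral.integral_congr_ae
  filter_upwards [ae_ne_pt 1] with x hx hmem
  rw [Set.uIoc_of_le hab] at hmem
  exact sqw_pos ⟨le_trans ha hmem.1.le, lt_of_le_of_ne (le_trans hmem.2 hb) hx⟩

lemma integral_sqw_neg {a b : ℝ} (hab : a ≤ b) (ha : 1 ≤ a) (hb : b ≤ 2) :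
    (∫ x in a..b, sqw x) = -(b - a) := by
  rw [show (∫ x in a..b, sqw x) = ∫ x in a..b, (-1:ℝ) from ?_]
  · simp
  apply intervalIntegral.integral_congr_ae
  filter_upwards [ae_ne_pt 2] with x hx hmem
  rw [Set.uIoc_of_le hab] at hmem
  exact sqw_neg ⟨le_trans ha hmem.1.le, lt_of_le_of_ne (le_trans hmem.2 hb) hx⟩

/-- The primitive-over-one-period function. -/
noncomputable def Fw : ℝ → ℝ := fun a => ∫ x in a..(a + 1), sqw x

lemma Fw_eval {a : ℝ} (ha : 0 ≤ a) (ha1 : a ≤ 1) : Fw a = 1 - 2 * a := by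
  have h1 : (∫ x in a..1, sqw x) = 1 - a := integral_sqw_pos ha1 ha le_rfl
  have h2 : (∫ x in (1:ℝ)..(a+1), sqw x) = -a := by
    rw [integral_sqw_neg (by linarith) le_rfl (by linarith)]; ring
  unfold Fw
  rw [← intervalIntegral.integral_add_adjacent_intervals (sqw_ii a 1) (sqw_ii 1 (a+1)), h1, h2]
  ring

lemma Fw_anti (a : ℝ) : Fw (a + 1) = - Fw a := by
  unfold Fw
  rw [show a + 1 + 1 = (a + 1) + 1 by ring,
    ← intervalIntegral.integral_comp_add_right (f := sqw) (a := a) (b := a + 1) 1]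
  rw [show (∫ x in a..(a+1), sqw (x + 1)) = ∫ x in a..(a+1), -sqw x from
    intervalIntegral.integral_congr (fun x _ => sqw_anti x)]
  rw [intervalIntegral.integral_neg]

lemma Fw_periodic : Function.Periodic Fw 2 := by
  intro t
  have : t + 2 = (t + 1) + 1 := by ring
  rw [this, Fw_anti, Fw_anti, neg_neg]

lemma Fw_continuous : Continuous Fw := by
  have heq : Fw = fun a => (∫ x in (0:ℝ)..(a + 1), sqw x) - ∫ x in (0:ℝ)..a, sqw x := by
    funext a
    unfold Fw
    rw [eq_sub_iff_add_eq, add_comm,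
      intervalIntegral.integral_add_adjacent_intervals (sqw_ii 0 a) (sqw_ii a (a+1))]
  rw [heq]
  exact ((intervalIntegral.continuous_primitive (fun a b => sqw_ii a b) 0).comp
    (continuous_id.add continuous_const)).sub
    (intervalIntegral.continuous_primitive (fun a b => sqw_ii a b) 0)

lemma Fw_ii (a b : ℝ) : IntervalIntegrable Fw volume a b :=
  Fw_continuous.intervalIntegrable a b

lemma sqw_int_period : (∫ x in (0:ℝ)..2, sqw x) = 0 := by
  rw [← intervalIntegral.integral_add_adjacent_intervals (sqw_ii 0 1) (sqw_ii 1 2),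
    integral_sqw_pos zero_le_one le_rfl le_rfl, integral_sqw_neg one_le_two le_rfl le_rfl]
  ring

lemma Fw_int_period : (∫ x in (0:ℝ)..2, Fw x) = 0 := by
  have h1 : (∫ x in (0:ℝ)..1, Fw x) = ∫ x in (0:ℝ)..1, (1 - 2 * x) := by
    apply intervalIntegral.integral_congr
    intro x hx
    rw [Set.uIcc_of_le zero_le_one] at hx
    exact Fw_eval hx.1 hx.2
  have h2 : (∫ x in (1:ℝ)..2, Fw x) = ∫ x in (1:ℝ)..2, (2 * x - 3) := by
    apply intervalIntegral.integral_congr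
    intro x hx
    rw [Set.uIcc_of_le one_le_two] at hx
    have := Fw_anti (x - 1)
    rw [show x - 1 + 1 = x by ring] at this
    rw [this, Fw_eval (by linarith [hx.1]) (by linarith [hx.2])]
    ring
  rw [← intervalIntegral.integral_add_adjacent_intervals (Fw_ii 0 1) (Fw_ii 1 2), h1, h2]
  norm_num [intervalIntegral.integral_sub, intervalIntegral.integral_const_mul,
    integral_id, mul_comm]

/-- Integral of a 2-periodic, zero-mean function over `[a, a+n]` for odd `n`. -/
lemma odd_shift {f : ℝ → ℝ} (hf : Function.Periodic f 2)
    (hint : ∀ a b, IntervalIntegrable f volume a b)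
    (hzero : (∫ x in (0:ℝ)..2, f x) = 0) {n : ℕ} (hn : Odd n) (a : ℝ) :
    (∫ x in a..(a + n), f x) = ∫ x in a..(a + 1), f x := by
  obtain ⟨m, hm⟩ := hn
  have key : (∫ x in (a+1)..(a + 1 + (m : ℤ) • (2:ℝ)), f x)
      = (m : ℤ) • ∫ x in (a+1)..(a + 1 + 2), f x :=
    hf.intervalIntegral_add_zsmul_eq m (a + 1) hint
  have hper : (∫ x in (a+1)..(a + 1 + 2), f x) = ∫ x in (0:ℝ)..2, f x := by
    simpa using hf.intervalIntegral_add_eq (a + 1) 0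
  rw [hper, hzero, smul_zero] at key
  have hsplit : (∫ x in a..(a + n), f x)
      = (∫ x in a..(a + 1), f x) + ∫ x in (a+1)..(a + n), f x :=
    (intervalIntegral.integral_add_adjacent_intervals (hint a (a+1)) (hint (a+1) (a + n))).symm
  have hn' : (a : ℝ) + n = a + 1 + (m : ℤ) • (2:ℝ) := by
    rw [zsmul_eq_mul]; push_cast [hm]; ring
  rw [hsplit, hn', key, add_zero]

lemma Fw_int_c {c : ℝ} (hc0 : 0 < c) (hc1 : c < 1) :
    (∫ x in c..(c + 1), Fw x) = 2 * c * (c - 1) := by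
  have h1 : (∫ x in c..(1:ℝ), Fw x) = ∫ x in c..(1:ℝ), (1 - 2 * x) := by
    apply intervalIntegral.integral_congr
    intro x hx
    rw [Set.uIcc_of_le hc1.le] at hx
    exact Fw_eval (le_trans hc0.le hx.1) hx.2
  have h2 : (∫ x in (1:ℝ)..(c + 1), Fw x) = ∫ x in (1:ℝ)..(c + 1), (2 * x - 3) := by
    apply intervalIntegral.integral_congr
    intro x hx
    rw [Set.uIcc_of_le (by linarith : (1:ℝ) ≤ c + 1)] at hx
    have := Fw_anti (x - 1)
    rw [show x - 1 + 1 = x by ring] at this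
    rw [this, Fw_eval (by linarith [hx.1]) (by linarith [hx.2])]
    ring
  rw [← intervalIntegral.integral_add_adjacent_intervals (Fw_ii c 1) (Fw_ii 1 (c+1)), h1, h2]
  norm_num [intervalIntegral.integral_sub, intervalIntegral.integral_const_mul,
    integral_id, mul_comm]
  ring_nf

/-- If `k, l` are odd and `c ∈ (0,1)`, the average of the square wave
`h(k x₁ + l x₂ + c)` over the unit square equals `2c(c−1)/(kl)`. -/
theorem squareWave_integral_odd
    (h : ℝ → ℝ)
    (hper : ∀ t : ℝ, h (t + 2) = h t)
    (hpos : ∀ t ∈ Set.Ico (0:ℝ) 1, h t = 1)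
    (hneg : ∀ t ∈ Set.Ico (1:ℝ) 2, h t = -1)
    (k l : ℕ) (hk : 0 < k) (hl : 0 < l) (hkodd : Odd k) (hlodd : Odd l)
    (c : ℝ) (hc : c ∈ Set.Ioo (0:ℝ) 1) :
    ∫ x₁ in (0:ℝ)..1, ∫ x₂ in (0:ℝ)..1, h (k * x₁ + l * x₂ + c)
      = 2 * c * (c - 1) / (k * l) := by
  -- h equals the explicit square wave
  have hP : Function.Periodic h 2 := hper
  have hhg : h = sqw := by
    funext t
    have hmem : 2 * Int.fract (t / 2) ∈ Set.Ico (0:ℝ) 2 :=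
      ⟨by linarith [Int.fract_nonneg (t / 2)], by linarith [Int.fract_lt_one (t / 2)]⟩
    have hrepr : t = 2 * Int.fract (t / 2) + (⌊t / 2⌋ : ℤ) • (2:ℝ) := by
      rw [zsmul_eq_mul]
      have := Int.floor_add_fract (t / 2)
      push_cast
      linarith
    have hshift : h t = h (2 * Int.fract (t / 2)) := by
      conv_lhs => rw [hrepr]
      exact hP.zsmul ⌊t / 2⌋ _
    have hshift2 : sqw t = sqw (2 * Int.fract (t / 2)) := by
      conv_lhs => rw [hrepr]
      exact sqw_periodic.zsmul ⌊t / 2⌋ _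
    rw [hshift, hshift2]
    rcases lt_or_ge (2 * Int.fract (t / 2)) 1 with hlt | hge
    · rw [hpos _ ⟨hmem.1, hlt⟩, sqw_pos ⟨hmem.1, hlt⟩]
    · rw [hneg _ ⟨hge, hmem.2⟩, sqw_neg ⟨hge, hmem.2⟩]
  subst hhg
  have hlne : (l : ℝ) ≠ 0 := Nat.cast_ne_zero.mpr hl.ne'
  have hkne : (k : ℝ) ≠ 0 := Nat.cast_ne_zero.mpr hk.ne'
  -- inner integral
  have inner : ∀ a : ℝ, (∫ x₂ in (0:ℝ)..1, sqw ((l:ℝ) * x₂ + a)) = (l:ℝ)⁻¹ * Fw a := by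
    intro a
    rw [intervalIntegral.integral_comp_mul_add sqw hlne a]
    rw [mul_zero, zero_add, mul_one, smul_eq_mul]
    congr 1
    rw [show (l:ℝ) + a = a + (l:ℕ) by push_cast; ring,
      odd_shift sqw_periodic sqw_ii sqw_int_period hlodd a]
    rfl
  have hmain : (∫ x₁ in (0:ℝ)..1, ∫ x₂ in (0:ℝ)..1, sqw ((k:ℝ) * x₁ + (l:ℝ) * x₂ + c))
      = (l:ℝ)⁻¹ * ∫ x₁ in (0:ℝ)..1, Fw ((k:ℝ) * x₁ + c) := by
    rw [← intervalIntegral.integral_const_mul]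
    apply intervalIntegral.integral_congr
    intro x₁ _
    show (∫ x₂ in (0:ℝ)..1, sqw ((k:ℝ) * x₁ + (l:ℝ) * x₂ + c))
        = (l:ℝ)⁻¹ * Fw ((k:ℝ) * x₁ + c)
    rw [intervalIntegral.integral_congr
      (g := fun x₂ => sqw ((l:ℝ) * x₂ + ((k:ℝ) * x₁ + c)))
      (fun x₂ _ => by rw [show (k:ℝ) * x₁ + (l:ℝ) * x₂ + c
        = (l:ℝ) * x₂ + ((k:ℝ) * x₁ + c) by ring])]
    exact inner _
  rw [hmain]
  rw [intervalIntegral.integral_comp_mul_add Fw hkne c, mul_zero, zero_add, mul_one, smul_eq_mul]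
  rw [show (k:ℝ) + c = c + (k:ℕ) by push_cast; ring,
    odd_shift Fw_periodic Fw_ii Fw_int_period hkodd c,
    Fw_int_c hc.1 hc.2, div_eq_mul_inv, mul_inv]
  ring
end

section
/- Let h : ℝ → ℝ be the 2-periodic function with h(t) = 1 for t ∈ [0,1) and h(t) = −1 for t ∈ [1,2). Let k, l be odd positive integers. Then for every c ∈ ℝ, ∫₀¹∫₀¹ h(k·x₁ + l·x₂ + c) dx₁ dx₂ ≤ 1/(2kl), and equality holds for c = 3/2; i.e. the maximum over c of this integral equals 1/(2kl). -/
open MeasureTheory intervalIntegral Set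

noncomputable def gexp (c : ℝ) : ℝ := 4 * |Int.fract (c/2) - 1/2| - 1

lemma fract_half (x : ℝ) :
    (Int.fract x < 1/2 ∧ Int.fract (x + 1/2) = Int.fract x + 1/2) ∨
    (1/2 ≤ Int.fract x ∧ Int.fract (x + 1/2) = Int.fract x - 1/2) := by
  have h0 := Int.fract_nonneg x
  have h1 := Int.fract_lt_one x
  have hx : x + 1/2 = (⌊x⌋ : ℤ) + (Int.fract x + 1/2) := by
    rw [Int.fract]; push_cast; ring
  rcases lt_or_ge (Int.fract x) (1/2) with hc | hc
  · left
    refine ⟨hc, ?_⟩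
    rw [hx, Int.fract_intCast_add, Int.fract_eq_self.mpr ⟨by linarith, by linarith⟩]
  · right
    refine ⟨hc, ?_⟩
    have hy : Int.fract x + 1/2 = ((1 : ℤ) : ℝ) + (Int.fract x - 1/2) := by
      push_cast; ring
    rw [hx, Int.fract_intCast_add, hy, Int.fract_intCast_add,
      Int.fract_eq_self.mpr ⟨by linarith, by linarith⟩]

lemma gexp_bound (c : ℝ) : |gexp c| ≤ 1 := by
  have h0 := Int.fract_nonneg (c/2)
  have h1 := Int.fract_lt_one (c/2)
  unfold gexp
  rcases abs_cases (Int.fract (c/2) - 1/2) with ⟨he, _⟩ | ⟨he, _⟩ <;>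
    rw [he] <;> rw [abs_le] <;> constructor <;> linarith

lemma gexp_meas : Measurable gexp := by
  unfold gexp
  exact (((measurable_fract.comp (measurable_id.div_const 2)).sub
    measurable_const).abs.const_mul 4).sub measurable_const

lemma intble_of_meas_bdd {f : ℝ → ℝ} (hm : Measurable f) (hb : ∀ t, |f t| ≤ 1)
    (a b : ℝ) : IntervalIntegrable f volume a b := by
  refine (_root_.intervalIntegrable_const (c := (1:ℝ))).mono_fun'
    (hm.aestronglyMeasurable.restrict) (ae_of_all _ fun x => ?_)
  simpa [Real.norm_eq_abs] using hb x

lemma gexp_intble (a b : ℝ) : IntervalIntegrable gexp volume a b :=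
  intble_of_meas_bdd gexp_meas gexp_bound a b

lemma gexp_per_int (n : ℤ) (c : ℝ) : gexp (c + 2*n) = gexp c := by
  unfold gexp
  have : (c + 2*n)/2 = c/2 + n := by ring
  rw [this, Int.fract_add_intCast]

lemma gexp_anti (c : ℝ) : gexp (c + 1) = -gexp c := by
  unfold gexp
  have h0 := Int.fract_nonneg (c/2)
  have h1 := Int.fract_lt_one (c/2)
  have hc2 : (c+1)/2 = c/2 + 1/2 := by ring
  rw [hc2]
  rcases fract_half (c/2) with ⟨hlt, he⟩ | ⟨hge, he⟩ <;> rw [he]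
  · rw [show Int.fract (c/2) + 1/2 - 1/2 = Int.fract (c/2) by ring,
      abs_of_nonneg h0, abs_of_nonpos (by linarith)]
    ring
  · rw [show Int.fract (c/2) - 1/2 - 1/2 = Int.fract (c/2) - 1 by ring,
      abs_of_nonpos (by linarith), abs_of_nonneg (by linarith)]
    ring

lemma gexp_eval1 {c : ℝ} (hc : c ∈ Icc (0:ℝ) 1) : gexp c = 1 - 2*c := by
  obtain ⟨h0, h1⟩ := hc
  unfold gexp
  rw [Int.fract_eq_self.mpr ⟨by linarith, by linarith⟩,
    abs_of_nonpos (by linarith)]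
  ring

lemma gexp_eval2 {c : ℝ} (hc : c ∈ Icc (1:ℝ) 2) : gexp c = 2*c - 3 := by
  obtain ⟨h0, h1⟩ := hc
  rcases eq_or_lt_of_le h1 with rfl | h1
  · rw [show (2:ℝ) = 0 + 2*(1:ℤ) by norm_num, gexp_per_int,
      gexp_eval1 ⟨le_refl 0, by norm_num⟩]
    norm_num
  · unfold gexp
    rw [Int.fract_eq_self.mpr ⟨by linarith, by linarith⟩,
      abs_of_nonneg (by linarith)]
    ring

lemma period_zero {f : ℝ → ℝ} (hi : ∀ a b : ℝ, IntervalIntegrable f volume a b)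
    (ha : ∀ t : ℝ, f (t + 1) = -f t) (b : ℝ) : (∫ x in b..(b+2), f x) = 0 := by
  have h1 : (∫ x in (b+1)..(b+2), f x) = ∫ x in b..(b+1), f (x+1) := by
    rw [intervalIntegral.integral_comp_add_right]
    norm_num [add_assoc]
  have h2 : (∫ x in b..(b+1), f (x+1)) = -∫ x in b..(b+1), f x := by
    simp_rw [ha]
    exact intervalIntegral.integral_neg
  have h3 := intervalIntegral.integral_add_adjacent_intervals
    (hi b (b+1)) (hi (b+1) (b+2))
  rw [h1, h2] at h3
  linarith

lemma odd_collapse {f : ℝ → ℝ} (hi : ∀ a b : ℝ, IntervalIntegrable f volume a b)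
    (ha : ∀ t : ℝ, f (t + 1) = -f t) (m : ℕ) (a : ℝ) :
    (∫ x in a..(a + (2*m+1 : ℕ)), f x) = ∫ x in a..(a+1), f x := by
  induction m with
  | zero => norm_num
  | succ m ih =>
      have key : a + ((2*(m+1)+1 : ℕ) : ℝ) = (a + ((2*m+1 : ℕ) : ℝ)) + 2 := by
        push_cast; ring
      rw [key, ← intervalIntegral.integral_add_adjacent_intervals
        (hi a (a + ((2*m+1 : ℕ) : ℝ))) (hi _ _), period_zero hi ha, add_zero, ih]

lemma scale_odd {f : ℝ → ℝ} (hi : ∀ a b : ℝ, IntervalIntegrable f volume a b)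
    (ha : ∀ t : ℝ, f (t + 1) = -f t) (n : ℕ) (hn : Odd n) (a : ℝ) :
    (∫ x in (0:ℝ)..1, f (n * x + a)) = (1/(n:ℝ)) * ∫ x in (0:ℝ)..1, f (x + a) := by
  have hn0 : (n:ℝ) ≠ 0 := Nat.cast_ne_zero.mpr hn.pos.ne'
  obtain ⟨m, hm⟩ := hn
  rw [intervalIntegral.integral_comp_mul_add f hn0 a,
    intervalIntegral.integral_comp_add_right]
  have h1 : (n:ℝ) * 0 + a = a := by ring
  have h2 : (n:ℝ) * 1 + a = a + (n:ℝ) := by ring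
  rw [h1, h2, show n = 2*m+1 by omega, odd_collapse hi ha m a,
    smul_eq_mul, one_div, zero_add, add_comm (1:ℝ) a]

lemma poly1 (a b : ℝ) : (∫ x in a..b, (1 - 2*x)) = (b - b^2) - (a - a^2) := by
  rw [intervalIntegral.integral_sub (intervalIntegrable_const)
    ((intervalIntegral.intervalIntegrable_id).const_mul 2),
    intervalIntegral.integral_const_mul, integral_id, intervalIntegral.integral_const,
    smul_eq_mul]
  ring

lemma poly2 (a b : ℝ) : (∫ x in a..b, (2*x - 3)) = (b^2 - 3*b) - (a^2 - 3*a) := by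
  rw [intervalIntegral.integral_sub
    ((intervalIntegral.intervalIntegrable_id).const_mul 2) (intervalIntegrable_const),
    intervalIntegral.integral_const_mul, integral_id, intervalIntegral.integral_const,
    smul_eq_mul]
  ring

lemma Gval {c : ℝ} (hc : c ∈ Icc (0:ℝ) 1) :
    (∫ x in (0:ℝ)..1, gexp (x + c)) = 2*c^2 - 2*c := by
  obtain ⟨h0, h1⟩ := hc
  rw [intervalIntegral.integral_comp_add_right, zero_add,
    ← intervalIntegral.integral_add_adjacent_intervals (gexp_intble c 1) (gexp_intble 1 (1+c))]
  have e1 : (∫ x in c..(1:ℝ), gexp x) = ∫ x in c..(1:ℝ), (1 - 2*x) := by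
    apply intervalIntegral.integral_congr
    intro x hx
    rw [Set.uIcc_of_le h1] at hx
    exact gexp_eval1 ⟨le_trans h0 hx.1, hx.2⟩
  have e2 : (∫ x in (1:ℝ)..(1+c), gexp x) = ∫ x in (1:ℝ)..(1+c), (2*x - 3) := by
    apply intervalIntegral.integral_congr
    intro x hx
    rw [Set.uIcc_of_le (by linarith)] at hx
    exact gexp_eval2 ⟨hx.1, by linarith [hx.2]⟩
  rw [e1, e2, poly1, poly2]
  ring

lemma Ganti (c : ℝ) :
    (∫ x in (0:ℝ)..1, gexp (x + (c+1))) = -∫ x in (0:ℝ)..1, gexp (x + c) := by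
  have : ∀ x : ℝ, gexp (x + (c+1)) = -gexp (x + c) := by
    intro x
    rw [show x + (c+1) = (x + c) + 1 by ring, gexp_anti]
  simp_rw [this]
  exact intervalIntegral.integral_neg

lemma Gper_int (n : ℤ) (c : ℝ) :
    (∫ x in (0:ℝ)..1, gexp (x + (c + 2*n))) = ∫ x in (0:ℝ)..1, gexp (x + c) := by
  apply intervalIntegral.integral_congr
  intro x _
  show gexp (x + (c + 2*n)) = gexp (x + c)
  rw [show x + (c + 2*n) = (x + c) + 2*n by ring, gexp_per_int]

lemma Gbound (c : ℝ) : (∫ x in (0:ℝ)..1, gexp (x + c)) ≤ 1/2 := by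
  have key : ∀ r ∈ Ico (0:ℝ) 2, (∫ x in (0:ℝ)..1, gexp (x + r)) ≤ 1/2 := by
    intro r ⟨hr0, hr2⟩
    rcases lt_or_ge r 1 with h1 | h1
    · rw [Gval ⟨hr0, h1.le⟩]; nlinarith
    · have : r = (r - 1) + 1 := by ring
      rw [this, Ganti, Gval ⟨by linarith, by linarith⟩]
      nlinarith [sq_nonneg (2*(r-1) - 1)]
  have hc : c = 2 * Int.fract (c/2) + 2 * ⌊c/2⌋ := by
    rw [Int.fract]; ring
  calc (∫ x in (0:ℝ)..1, gexp (x + c))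
      = ∫ x in (0:ℝ)..1, gexp (x + 2 * Int.fract (c/2)) := by
        rw [← Gper_int ⌊c/2⌋ (2 * Int.fract (c/2)), ← hc]
    _ ≤ 1/2 := key _ ⟨mul_nonneg (by norm_num) (Int.fract_nonneg _), by linarith [Int.fract_lt_one (c/2)]⟩

lemma Geq : (∫ x in (0:ℝ)..1, gexp (x + 3/2)) = 1/2 := by
  rw [show (3/2 : ℝ) = 1/2 + 1 by norm_num, Ganti, Gval ⟨by norm_num, by norm_num⟩]
  norm_num
lemma h_eq_H {h : ℝ → ℝ} (hper : ∀ t : ℝ, h (t + 2) = h t)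
    (hpos : ∀ t ∈ Set.Ico (0:ℝ) 1, h t = 1)
    (hneg : ∀ t ∈ Set.Ico (1:ℝ) 2, h t = -1) (t : ℝ) :
    h t = if Int.fract (t/2) < 1/2 then 1 else -1 := by
  have hp : Function.Periodic h 2 := hper
  set r := 2 * Int.fract (t/2) with hr
  have h0 := Int.fract_nonneg (t/2)
  have h1 := Int.fract_lt_one (t/2)
  have ht : h t = h r := by
    have he : t = r + (⌊t/2⌋ : ℤ) * 2 := by rw [hr, Int.fract]; push_cast; ring
    conv_lhs => rw [he]
    exact (hp.int_mul ⌊t/2⌋) r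
  rcases lt_or_ge (Int.fract (t/2)) (1/2) with hc | hc
  · rw [if_pos hc, ht]
    exact hpos r ⟨by linarith, by rw [hr]; linarith⟩
  · rw [if_neg (not_lt.mpr hc), ht]
    exact hneg r ⟨by rw [hr]; linarith, by rw [hr]; linarith⟩



/-- If `k, l` are odd, the average of the square wave
`h(k x₁ + l x₂ + c)` over the unit square is at most `1/(2kl)` for every phase `c`,
with equality for `c = 3/2`; i.e. its maximum over `c` equals `1/(2kl)`. -/
theorem squareWave_integral_max
    (h : ℝ → ℝ)
    (hper : ∀ t : ℝ, h (t + 2) = h t)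
    (hpos : ∀ t ∈ Set.Ico (0:ℝ) 1, h t = 1)
    (hneg : ∀ t ∈ Set.Ico (1:ℝ) 2, h t = -1)
    (k l : ℕ) (hk : 0 < k) (hl : 0 < l) (hkodd : Odd k) (hlodd : Odd l) :
    (∀ c : ℝ, (∫ x₁ in (0:ℝ)..1, ∫ x₂ in (0:ℝ)..1, h (k * x₁ + l * x₂ + c))
        ≤ 1 / (2 * k * l)) ∧
    (∫ x₁ in (0:ℝ)..1, ∫ x₂ in (0:ℝ)..1, h (k * x₁ + l * x₂ + 3/2))
        = 1 / (2 * k * l) := by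
  have hp : Function.Periodic h 2 := hper
  have hH := h_eq_H hper hpos hneg
  have hm : Measurable h := by
    have : h = fun t => if Int.fract (t/2) < 1/2 then (1:ℝ) else -1 := funext hH
    rw [this]
    exact Measurable.ite
      (measurableSet_lt (measurable_fract.comp (measurable_id.div_const 2))
        measurable_const) measurable_const measurable_const
  have hb : ∀ t, |h t| ≤ 1 := by
    intro t; rw [hH t]; split <;> norm_num
  have hanti : ∀ t : ℝ, h (t + 1) = -h t := by
    intro t
    rw [hH t, hH (t+1), show (t+1)/2 = t/2 + 1/2 by ring]
    rcases fract_half (t/2) with ⟨hlt, he⟩ | ⟨hge, he⟩ <;> rw [he]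
    · rw [if_pos hlt, if_neg (by push_neg; linarith [Int.fract_nonneg (t/2)])]
    · rw [if_neg (not_lt.mpr hge), if_pos (by linarith [Int.fract_lt_one (t/2)])]
      norm_num
  have hint : ∀ a b : ℝ, IntervalIntegrable h volume a b := intble_of_meas_bdd hm hb
  have shift_int : ∀ r a b : ℝ, IntervalIntegrable (fun x => h (x + r)) volume a b :=
    fun r a b => intble_of_meas_bdd (hm.comp (measurable_id.add_const r))
      (fun t => hb _) a b
  -- base integral computation
  have h_integral_base : ∀ r ∈ Ico (0:ℝ) 1, (∫ x in (0:ℝ)..1, h (x + r)) = 1 - 2*r := by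
    rintro r ⟨hr0, hr1⟩
    rw [← intervalIntegral.integral_add_adjacent_intervals
      (shift_int r 0 (1-r)) (shift_int r (1-r) 1)]
    have e1 : (∫ x in (0:ℝ)..(1-r), h (x + r)) = ∫ x in (0:ℝ)..(1-r), (1:ℝ) := by
      apply intervalIntegral.integral_congr_ae
      filter_upwards [compl_mem_ae_iff.mpr (measure_singleton (1-r))] with x hx hmem
      rw [Set.uIoc_of_le (by linarith)] at hmem
      have hxne : x ≠ 1 - r := hx
      have hxlt : x < 1 - r := lt_of_le_of_ne hmem.2 hxne
      exact hpos (x + r) ⟨by linarith [hmem.1], by linarith⟩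
    have e2 : (∫ x in (1-r)..(1:ℝ), h (x + r)) = ∫ x in (1-r)..(1:ℝ), (-1:ℝ) := by
      apply intervalIntegral.integral_congr
      intro x hx
      rw [Set.uIcc_of_le (by linarith)] at hx
      exact hneg (x + r) ⟨by linarith [hx.1], by linarith [hx.2]⟩
    rw [e1, e2]
    simp only [intervalIntegral.integral_const, smul_eq_mul]
    ring
  -- full integral computation
  have h_integral : ∀ a : ℝ, (∫ x in (0:ℝ)..1, h (x + a)) = gexp a := by
    intro a
    have h0 := Int.fract_nonneg (a/2)
    have h1 := Int.fract_lt_one (a/2)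
    set r := 2 * Int.fract (a/2) with hrdef
    have ha : a = r + 2 * (⌊a/2⌋ : ℤ) := by rw [hrdef, Int.fract]; push_cast; ring
    have hGr : (∫ x in (0:ℝ)..1, h (x + a)) = ∫ x in (0:ℝ)..1, h (x + r) := by
      apply intervalIntegral.integral_congr
      intro x _
      show h (x + a) = h (x + r)
      conv_lhs => rw [ha]
      rw [show x + (r + 2 * (⌊a/2⌋ : ℤ)) = (x + r) + (⌊a/2⌋ : ℤ) * 2 by ring]
      exact (hp.int_mul ⌊a/2⌋) (x + r)
    have hgr : gexp a = gexp r := by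
      conv_lhs => rw [ha]
      exact gexp_per_int ⌊a/2⌋ r
    rw [hGr, hgr]
    rcases lt_or_ge r 1 with hc | hc
    · rw [h_integral_base r ⟨by linarith, hc⟩, gexp_eval1 ⟨by linarith, hc.le⟩]
    · have hr2 : r < 2 := by rw [hrdef]; linarith
      have e : ∀ x : ℝ, h (x + r) = -h (x + (r - 1)) := by
        intro x
        rw [show x + r = (x + (r-1)) + 1 by ring, hanti]
      simp_rw [e]
      rw [intervalIntegral.integral_neg,
        h_integral_base (r-1) ⟨by linarith, by linarith⟩,
        gexp_eval2 ⟨hc, hr2.le⟩]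
      ring
  -- inner integral
  have inner : ∀ (c x₁ : ℝ),
      (∫ x₂ in (0:ℝ)..1, h (k * x₁ + l * x₂ + c)) = (1/(l:ℝ)) * gexp (k * x₁ + c) := by
    intro c x₁
    have e : ∀ x₂ : ℝ, (k:ℝ) * x₁ + (l:ℝ) * x₂ + c = (l:ℝ) * x₂ + ((k:ℝ) * x₁ + c) :=
      fun _ => by ring
    simp_rw [e]
    rw [scale_odd hint hanti l hlodd ((k:ℝ) * x₁ + c), h_integral]
  have outer : ∀ c : ℝ,
      (∫ x₁ in (0:ℝ)..1, ∫ x₂ in (0:ℝ)..1, h (k * x₁ + l * x₂ + c))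
        = (1/(l:ℝ)) * ((1/(k:ℝ)) * ∫ x in (0:ℝ)..1, gexp (x + c)) := by
    intro c
    rw [intervalIntegral.integral_congr
      (g := fun x₁ => (1/(l:ℝ)) * gexp ((k:ℝ) * x₁ + c)) (fun x₁ _ => inner c x₁),
      intervalIntegral.integral_const_mul,
      scale_odd gexp_intble gexp_anti k hkodd c]
  have hkR : (0:ℝ) < k := Nat.cast_pos.mpr hk
  have hlR : (0:ℝ) < l := Nat.cast_pos.mpr hl
  have harith : (1/(l:ℝ)) * ((1/(k:ℝ)) * (1/2)) = 1 / (2 * k * l) := by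
    field_simp
  constructor
  · intro c
    rw [outer c, ← harith]
    have hGb := Gbound c
    apply mul_le_mul_of_nonneg_left _ (by positivity)
    exact mul_le_mul_of_nonneg_left hGb (by positivity)
  · rw [outer (3/2), Geq, harith]
end

section
/- Let X₁, X₂, X₃, X₄ be real 2×2 matrices with det(X₁−X₂) = det(X₂−X₃) = det(X₃−X₄) = det(X₄−X₁) = 0 (a rank-one square), and suppose d₁₃ = det(X₁−X₃) and d₂₄ = det(X₂−X₄) satisfy d₁₃·d₂₄ > 0. If λ₁, λ₂, λ₃, λ₄ ≥ 0 with λ₁+λ₂+λ₃+λ₄ = 1 satisfy the polyconvexity condition det(λ₁X₁ + λ₂X₂ + λ₃X₃ + λ₄X₄) = λ₁det X₁ + λ₂det X₂ + λ₃det X₃ + λ₄det X₄, then λ₁λ₃ = 0 and λ₂λ₄ = 0; i.e. the point λ₁X₁+λ₂X₂+λ₃X₃+λ₄X₄ lies on one of the four edge segments [X₁,X₂], [X₂,X₃], [X₃,X₄], [X₄,X₁]. -/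
open Matrix

/-- On a rank-one square whose diagonals have determinants of the same sign,
any polyconvex combination lies on one of the four edges. -/
theorem rankOneSquare_same_sign_edges
    (X₁ X₂ X₃ X₄ : Matrix (Fin 2) (Fin 2) ℝ)
    (h12 : (X₁ - X₂).det = 0) (h23 : (X₂ - X₃).det = 0)
    (h34 : (X₃ - X₄).det = 0) (h41 : (X₄ - X₁).det = 0)
    (hsign : (X₁ - X₃).det * (X₂ - X₄).det > 0)
    (lam₁ lam₂ lam₃ lam₄ : ℝ)
    (h₁ : 0 ≤ lam₁) (h₂ : 0 ≤ lam₂) (h₃ : 0 ≤ lam₃) (h₄ : 0 ≤ lam₄)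
    (hsum : lam₁ + lam₂ + lam₃ + lam₄ = 1)
    (hpc : (lam₁ • X₁ + lam₂ • X₂ + lam₃ • X₃ + lam₄ • X₄).det
      = lam₁ * X₁.det + lam₂ * X₂.det + lam₃ * X₃.det + lam₄ * X₄.det) :
    lam₁ * lam₃ = 0 ∧ lam₂ * lam₄ = 0 := by
  have key : lam₁ * lam₃ * (X₁ - X₃).det + lam₂ * lam₄ * (X₂ - X₄).det = 0 := by
    simp only [Matrix.det_fin_two, Matrix.sub_apply, Matrix.add_apply, Matrix.smul_apply,
      smul_eq_mul] at h12 h23 h34 h41 hpc ⊢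
    linear_combination (-1 : ℝ) * hpc
      + (lam₁ * (X₁ 0 0 * X₁ 1 1 - X₁ 0 1 * X₁ 1 0)
        + lam₂ * (X₂ 0 0 * X₂ 1 1 - X₂ 0 1 * X₂ 1 0)
        + lam₃ * (X₃ 0 0 * X₃ 1 1 - X₃ 0 1 * X₃ 1 0)
        + lam₄ * (X₄ 0 0 * X₄ 1 1 - X₄ 0 1 * X₄ 1 0)) * hsum
      - lam₁ * lam₂ * h12 - lam₂ * lam₃ * h23 - lam₃ * lam₄ * h34 - lam₄ * lam₁ * h41
  set a := (X₁ - X₃).det with ha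
  set b := (X₂ - X₄).det with hb
  rcases lt_or_gt_of_ne (fun h : a = 0 => by simp [h] at hsign) with hneg | hpos
  · have hbneg : b < 0 := by nlinarith
    constructor <;> nlinarith [mul_nonneg h₁ h₃, mul_nonneg h₂ h₄]
  · have hbpos : b > 0 := by nlinarith
    constructor <;> nlinarith [mul_nonneg h₁ h₃, mul_nonneg h₂ h₄]
end

section
/- Let X₁, X₂, X₃, X₄ be real 2×2 matrices with det(X₁−X₂) = det(X₂−X₃) = det(X₃−X₄) = det(X₄−X₁) = 0, and suppose d₁₃ = det(X₁−X₃) > 0 and d₂₄ = det(X₂−X₄) < 0. Let λ₁, λ₂, λ₃, λ₄ ≥ 0 with λ₁+λ₂+λ₃+λ₄ = 1, λ₁+λ₂ > 0, λ₃+λ₄ > 0, and λ₁λ₃·d₁₃ + λ₂λ₄·d₂₄ = 0. Define P₁ = (λ₁X₁ + λ₂X₂)/(λ₁+λ₂) and P₂ = (λ₃X₃ + λ₄X₄)/(λ₃+λ₄). Then det(P₁ − P₂) = 0; in particular the point λ₁X₁+λ₂X₂+λ₃X₃+λ₄X₄ lies on a rank-one segment connecting a point of [X₁,X₂] to a point of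 [X₃,X₄]. -/
open Matrix

/-- On a rank-one square with diagonals of opposite determinant sign, any
polyconvex combination lies on a rank-one segment connecting `[X₁,X₂]` to `[X₃,X₄]`. -/
theorem rankOneSquare_opposite_sign_segment
    (X₁ X₂ X₃ X₄ : Matrix (Fin 2) (Fin 2) ℝ)
    (h12 : (X₁ - X₂).det = 0) (h23 : (X₂ - X₃).det = 0)
    (h34 : (X₃ - X₄).det = 0) (h41 : (X₄ - X₁).det = 0)
    (hd13 : 0 < (X₁ - X₃).det) (hd24 : (X₂ - X₄).det < 0)
    (lam₁ lam₂ lam₃ lam₄ : ℝ)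
    (h₁ : 0 ≤ lam₁) (h₂ : 0 ≤ lam₂) (h₃ : 0 ≤ lam₃) (h₄ : 0 ≤ lam₄)
    (hsum : lam₁ + lam₂ + lam₃ + lam₄ = 1)
    (h12pos : 0 < lam₁ + lam₂) (h34pos : 0 < lam₃ + lam₄)
    (hpc : lam₁ * lam₃ * (X₁ - X₃).det + lam₂ * lam₄ * (X₂ - X₄).det = 0) :
    ((lam₁ + lam₂)⁻¹ • (lam₁ • X₁ + lam₂ • X₂)
      - (lam₃ + lam₄)⁻¹ • (lam₃ • X₃ + lam₄ • X₄)).det = 0 := by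
  set s := lam₁ + lam₂ with hs
  set t := lam₃ + lam₄ with ht
  have key : ((t • (lam₁ • X₁ + lam₂ • X₂)) - (s • (lam₃ • X₃ + lam₄ • X₄))).det = 0 := by
    simp only [Matrix.det_fin_two, Matrix.sub_apply, Matrix.smul_apply, Matrix.add_apply,
      smul_eq_mul] at h12 h23 h34 h41 hpc ⊢
    rw [hs, ht] at *
    linear_combination (-(lam₁*(lam₃+lam₄))*(lam₂*(lam₃+lam₄))) * h12
      + ((lam₂*(lam₃+lam₄))*(lam₃*(lam₁+lam₂))) * h23
      - ((lam₃*(lam₁+lam₂))*(lam₄*(lam₁+lam₂))) * h34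
      + ((lam₁*(lam₃+lam₄))*(lam₄*(lam₁+lam₂))) * h41
      + ((lam₁+lam₂)*(lam₃+lam₄)) * hpc
  have hs0 : s ≠ 0 := ne_of_gt h12pos
  have ht0 : t ≠ 0 := ne_of_gt h34pos
  have heq : s⁻¹ • (lam₁ • X₁ + lam₂ • X₂) - t⁻¹ • (lam₃ • X₃ + lam₄ • X₄)
      = (s * t)⁻¹ • ((t • (lam₁ • X₁ + lam₂ • X₂)) - (s • (lam₃ • X₃ + lam₄ • X₄))) := by
    rw [smul_sub, smul_smul, smul_smul]
    congr 1 <;> congr 1 <;> field_simp <;> ring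
  rw [heq, Matrix.det_smul, key, mul_zero]
end

section
/- Let X₁, X₂, X₃, X₄ be real 2×2 matrices with det(X₁−X₂) = det(X₂−X₃) = det(X₃−X₄) = det(X₄−X₁) = 0, and suppose d₁₃ = det(X₁−X₃) > 0 and d₂₄ = det(X₂−X₄) < 0. For t ∈ [0,1] set s = f(t) := t·d₁₃ / (t·d₁₃ − (1−t)·d₂₄). Then det( (t·X₁ + (1−t)·X₂) − (s·X₄ + (1−s)·X₃) ) = 0; moreover f : [0,1] → [0,1] is continuous and increasing with f(0) = 0 and f(1) = 1. -/
/-!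
Since the four edges of the square are rank-one, the determinant of the difference between the
point `t X₁ + (1 - t) X₂` of one edge and the point `s X₄ + (1 - s) X₃` of the opposite edge is
affine in `s`: it equals `t d₁₃ - s (t d₁₃ - (1 - t) d₂₄)`. Its zero is therefore `s = f t`. When
`d₁₃ > 0 > d₂₄` the denominator of `f` is positive on `[0, 1]`, and `f` is a Möbius map whose
determinant `-d₁₃ d₂₄` is positive, hence increasing.
-/

open Matrix Set

/-- `det` is a quadratic form on `2 × 2` matrices; writing the difference as a bilinear combination
of the edges and diagonals, the vanishing edge determinants leave only the diagonal terms. -/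
theorem det_sub_of_rankOne_edges {R : Type*} [CommRing R]
    {X₁ X₂ X₃ X₄ : Matrix (Fin 2) (Fin 2) R}
    (h12 : (X₁ - X₂).det = 0) (h23 : (X₂ - X₃).det = 0)
    (h34 : (X₃ - X₄).det = 0) (h41 : (X₄ - X₁).det = 0) (t s : R) :
    ((t • X₁ + (1 - t) • X₂) - (s • X₄ + (1 - s) • X₃)).det
      = t * (X₁ - X₃).det - s * (t * (X₁ - X₃).det - (1 - t) * (X₂ - X₄).det) := by
  simp only [det_fin_two, Matrix.sub_apply, Matrix.add_apply, Matrix.smul_apply, smul_eq_mul] at *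
  linear_combination (1 - t - s + t * s) * h23 + (t * (t - 1)) * h12
    + (s * (s - 1)) * h34 + (t * s) * h41

noncomputable def rankOnePairing (a b t : ℝ) : ℝ := t * a / (t * a - (1 - t) * b)

section

variable {a b : ℝ}

theorem rankOnePairing_zero : rankOnePairing a b 0 = 0 := by
  simp [rankOnePairing]

theorem rankOnePairing_one (ha : a ≠ 0) : rankOnePairing a b 1 = 1 := by
  simp [rankOnePairing, ha]

theorem rankOnePairing_mul_denom {t : ℝ} (h : t * a - (1 - t) * b ≠ 0) :
    rankOnePairing a b t * (t * a - (1 - t) * b) = t * a :=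
  div_mul_cancel₀ _ h

variable (ha : 0 < a) (hb : b < 0)
include ha hb

theorem rankOnePairing_denom_pos {t : ℝ} (ht : t ∈ Icc (0 : ℝ) 1) :
    0 < t * a - (1 - t) * b := by
  obtain ⟨ht0, ht1⟩ := ht
  rcases ht0.eq_or_lt with rfl | ht0
  · simpa using hb
  · nlinarith [mul_pos ht0 ha, mul_nonneg (sub_nonneg.2 ht1) (neg_nonneg.2 hb.le)]

theorem continuousOn_rankOnePairing : ContinuousOn (rankOnePairing a b) (Icc 0 1) :=
  ContinuousOn.div (by fun_prop) (by fun_prop)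
    fun _ ht => (rankOnePairing_denom_pos ha hb ht).ne'

theorem strictMonoOn_rankOnePairing : StrictMonoOn (rankOnePairing a b) (Icc 0 1) := by
  intro t ht u hu htu
  rw [rankOnePairing, rankOnePairing,
    div_lt_div_iff₀ (rankOnePairing_denom_pos ha hb ht) (rankOnePairing_denom_pos ha hb hu)]
  nlinarith [mul_pos ha (neg_pos.2 hb), sub_pos.2 htu]

theorem mapsTo_rankOnePairing : MapsTo (rankOnePairing a b) (Icc 0 1) (Icc 0 1) := by
  intro t ht
  have hD := rankOnePairing_denom_pos ha hb ht
  obtain ⟨ht0, ht1⟩ := ht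
  refine ⟨div_nonneg (mul_nonneg ht0 ha.le) hD.le, (div_le_one hD).2 ?_⟩
  nlinarith [mul_nonneg (sub_nonneg.2 ht1) (neg_nonneg.2 hb.le)]

end

/-- Explicit rank-one pairing between the edges `[X₂,X₁]` and `[X₃,X₄]` of a
rank-one square with diagonals of opposite determinant sign, via the function
`f(t) = t d₁₃ / (t d₁₃ − (1−t) d₂₄)`. -/
theorem rankOneSquare_pairing_function
    (X₁ X₂ X₃ X₄ : Matrix (Fin 2) (Fin 2) ℝ)
    (h12 : (X₁ - X₂).det = 0) (h23 : (X₂ - X₃).det = 0)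
    (h34 : (X₃ - X₄).det = 0) (h41 : (X₄ - X₁).det = 0)
    (hd13 : 0 < (X₁ - X₃).det) (hd24 : (X₂ - X₄).det < 0)
    (f : ℝ → ℝ)
    (hfdef : ∀ t : ℝ, f t = t * (X₁ - X₃).det
      / (t * (X₁ - X₃).det - (1 - t) * (X₂ - X₄).det)) :
    (∀ t ∈ Set.Icc (0:ℝ) 1,
      ((t • X₁ + (1 - t) • X₂) - (f t • X₄ + (1 - f t) • X₃)).det = 0) ∧
    ContinuousOn f (Set.Icc (0:ℝ) 1) ∧
    StrictMonoOn f (Set.Icc (0:ℝ) 1) ∧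
    Set.MapsTo f (Set.Icc (0:ℝ) 1) (Set.Icc (0:ℝ) 1) ∧
    f 0 = 0 ∧ f 1 = 1 := by
  obtain rfl : f = rankOnePairing (X₁ - X₃).det (X₂ - X₄).det := funext hfdef
  refine ⟨fun t ht => ?_, continuousOn_rankOnePairing hd13 hd24,
    strictMonoOn_rankOnePairing hd13 hd24, mapsTo_rankOnePairing hd13 hd24,
    rankOnePairing_zero, rankOnePairing_one hd13.ne'⟩
  rw [det_sub_of_rankOne_edges h12 h23 h34 h41,
    rankOnePairing_mul_denom (rankOnePairing_denom_pos hd13 hd24 ht).ne', sub_self]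
end

section
/- Let X₁, X₂, X₃, X₄ be real 2×2 matrices with det(X₁−X₂) = det(X₂−X₃) = det(X₃−X₄) = det(X₄−X₁) = 0, det(X₁−X₃) = 0 and det(X₂−X₄) ≠ 0. If λ₁, λ₂, λ₃, λ₄ ≥ 0 with λ₁+λ₂+λ₃+λ₄ = 1 satisfy det(λ₁X₁ + λ₂X₂ + λ₃X₃ + λ₄X₄) = λ₁det X₁ + λ₂det X₂ + λ₃det X₃ + λ₄det X₄, then λ₂λ₄ = 0; i.e. the point lies in the convex hull of {X₁, X₂, X₃} or of {X₁, X₃, X₄}. -/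
open Matrix

/-- Degenerate rank-one square with one rank-one diagonal: polyconvex
combinations lie in the union of the two triangles `{X₁,X₂,X₃}` and `{X₁,X₃,X₄}`. -/
theorem rankOneSquare_degenerate_diagonal
    (X₁ X₂ X₃ X₄ : Matrix (Fin 2) (Fin 2) ℝ)
    (h12 : (X₁ - X₂).det = 0) (h23 : (X₂ - X₃).det = 0)
    (h34 : (X₃ - X₄).det = 0) (h41 : (X₄ - X₁).det = 0)
    (hd13 : (X₁ - X₃).det = 0) (hd24 : (X₂ - X₄).det ≠ 0)
    (lam₁ lam₂ lam₃ lam₄ : ℝ)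
    (h₁ : 0 ≤ lam₁) (h₂ : 0 ≤ lam₂) (h₃ : 0 ≤ lam₃) (h₄ : 0 ≤ lam₄)
    (hsum : lam₁ + lam₂ + lam₃ + lam₄ = 1)
    (hpc : (lam₁ • X₁ + lam₂ • X₂ + lam₃ • X₃ + lam₄ • X₄).det
      = lam₁ * X₁.det + lam₂ * X₂.det + lam₃ * X₃.det + lam₄ * X₄.det) :
    lam₂ * lam₄ = 0 := by
  have key : lam₂ * lam₄ * ((X₂ - X₄).det) = 0 := by
    simp only [Matrix.det_fin_two, Matrix.sub_apply, Matrix.add_apply, Matrix.smul_apply,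
      smul_eq_mul] at h12 h23 h34 h41 hd13 hpc ⊢
    linear_combination (lam₁ * (X₁ 0 0 * X₁ 1 1 - X₁ 0 1 * X₁ 1 0)
        + lam₂ * (X₂ 0 0 * X₂ 1 1 - X₂ 0 1 * X₂ 1 0)
        + lam₃ * (X₃ 0 0 * X₃ 1 1 - X₃ 0 1 * X₃ 1 0)
        + lam₄ * (X₄ 0 0 * X₄ 1 1 - X₄ 0 1 * X₄ 1 0)) * hsum
      - hpc - lam₁ * lam₂ * h12 - lam₂ * lam₃ * h23 - lam₃ * lam₄ * h34
      - lam₄ * lam₁ * h41 - lam₁ * lam₃ * hd13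
  rcases mul_eq_zero.mp key with h | h
  · exact h
  · exact absurd h hd24
end

section
/- Let C₁, C₂, C₃ be real 2×2 matrices each of rank one, and set a = det(C₁+C₂), b = det(C₁+C₃), c = det(C₂+C₃). If a ≠ 0, b ≠ 0 and c ≠ 0, then the matrices C₁, C₂, C₃ are linearly independent in the space of 2×2 real matrices. -/
open Matrix

lemma det_expand_aux (A B C : Matrix (Fin 2) (Fin 2) ℝ) (x y z : ℝ) :
    (x • A + y • B + z • C).det = x^2 * A.det + y^2 * B.det + z^2 * C.det
      + x*y*((A+B).det - A.det - B.det) + x*z*((A+C).det - A.det - C.det)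
      + y*z*((B+C).det - B.det - C.det) := by
  simp only [Matrix.det_fin_two, Matrix.add_apply, Matrix.smul_apply, smul_eq_mul]
  ring

lemma det_zero_of_rank_one (A : Matrix (Fin 2) (Fin 2) ℝ) (h : A.rank = 1) : A.det = 0 := by
  by_contra hd
  have hu : IsUnit A := (Matrix.isUnit_iff_isUnit_det A).mpr (isUnit_iff_ne_zero.mpr hd)
  have := Matrix.rank_of_isUnit A hu
  simp [h] at this

/-- If the three mixed determinants `a = det(C₁+C₂)`, `b = det(C₁+C₃)`,
`c = det(C₂+C₃)` of three rank-one `2×2` matrices are all nonzero, then `C₁, C₂, C₃`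
are linearly independent. -/
theorem rankOne_triple_linearIndependent
    (C₁ C₂ C₃ : Matrix (Fin 2) (Fin 2) ℝ)
    (hC₁ : C₁.rank = 1) (hC₂ : C₂.rank = 1) (hC₃ : C₃.rank = 1)
    (ha : (C₁ + C₂).det ≠ 0) (hb : (C₁ + C₃).det ≠ 0) (hc : (C₂ + C₃).det ≠ 0) :
    LinearIndependent ℝ ![C₁, C₂, C₃] := by
  have d₁ := det_zero_of_rank_one C₁ hC₁
  have d₂ := det_zero_of_rank_one C₂ hC₂
  have d₃ := det_zero_of_rank_one C₃ hC₃
  rw [Fintype.linearIndependent_iff]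
  intro g hg
  simp only [Fin.sum_univ_three, Matrix.cons_val_zero, Matrix.cons_val_one, Matrix.head_cons,
    Matrix.cons_val_two, Matrix.tail_cons] at hg
  set x := g 0 with hx
  set y := g 1 with hy
  set z := g 2 with hz
  set a := (C₁ + C₂).det with hadef
  set b := (C₁ + C₃).det with hbdef
  set c := (C₂ + C₃).det with hcdef
  have key : ∀ t s u : ℝ, (t • C₁ + s • C₂ + u • C₃).det = 0 →
      t*s*a + t*u*b + s*u*c = 0 := by
    intro t s u h
    rw [det_expand_aux] at h
    rw [d₁, d₂, d₃] at h
    linarith [h]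
  have E0 : x*y*a + x*z*b + y*z*c = 0 := by
    apply key; rw [hg]; simp
  have E1 : (x+1)*y*a + (x+1)*z*b + y*z*c = 0 := by
    apply key
    have : (x+1) • C₁ + y • C₂ + z • C₃ = C₁ := by
      rw [add_smul, one_smul]
      have : x • C₁ + C₁ + y • C₂ + z • C₃ = (x • C₁ + y • C₂ + z • C₃) + C₁ := by abel
      rw [this, hg, zero_add]
    rw [this]; exact d₁
  have E2 : x*(y+1)*a + x*z*b + (y+1)*z*c = 0 := by
    apply key
    have : x • C₁ + (y+1) • C₂ + z • C₃ = C₂ := by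
      rw [add_smul, one_smul]
      have : x • C₁ + (y • C₂ + C₂) + z • C₃ = (x • C₁ + y • C₂ + z • C₃) + C₂ := by abel
      rw [this, hg, zero_add]
    rw [this]; exact d₂
  have E3 : x*y*a + x*(z+1)*b + y*(z+1)*c = 0 := by
    apply key
    have : x • C₁ + y • C₂ + (z+1) • C₃ = C₃ := by
      rw [add_smul, one_smul]
      have : x • C₁ + y • C₂ + (z • C₃ + C₃) = (x • C₁ + y • C₂ + z • C₃) + C₃ := by abel
      rw [this, hg, zero_add]
    rw [this]; exact d₃
  have ea : y*a + z*b = 0 := by nlinarith [E1, E0]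
  have eb : x*a + z*c = 0 := by nlinarith [E2, E0]
  have ec : x*b + y*c = 0 := by nlinarith [E3, E0]
  have hz0 : z = 0 := by
    have h1 : a*(x*b + y*c) = 0 := by rw [ec]; ring
    have h2 : a*x*b + a*y*c = 0 := by linarith [h1]; 
    have h3 : a*x = -(z*c) := by linarith [eb]
    have h4 : a*y = -(z*b) := by linarith [ea]
    have : -(z*c)*b + -(z*b)*c = 0 := by
      linear_combination h2 - b*h3 - c*h4
    have h5 : 2*z*b*c = 0 := by linarith [this]
    have hbc : b*c ≠ 0 := mul_ne_zero hb hc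
    have : z*(b*c) = 0 := by linarith [h5]
    rcases mul_eq_zero.mp this with h | h
    · exact h
    · exact absurd h hbc
  have hx0 : x = 0 := by
    rw [hz0] at eb
    simp at eb
    rcases eb with h | h
    · exact h
    · exact absurd h ha
  have hy0 : y = 0 := by
    rw [hz0] at ea
    simp at ea
    rcases ea with h | h
    · exact h
    · exact absurd h ha
  intro i
  fin_cases i
  · exact hx0
  · exact hy0
  · exact hz0
end

section
/- Let C₁, C₂, C₃ be real 2×2 matrices each of rank one with det(C₁+C₂) = 0, and for ε ∈ {−1,+1}³ write X_ε = ε₁C₁ + ε₂C₂ + ε₃C₃. Then for all α, β ≥ 0 with α + β = 1/4 and every rank-one convex function f : M₂(ℝ) → ℝ, f(0) ≤ α·(f(X₊₊₊) + f(X₊₋₋) + f(X₋₊₋) + f(X₋₋₊)) + β·(f(X₋₋₋) + f(X₊₊₋) + f(X₊₋₊) + f(X₋₊₊)); i.e. every symmetric measure on the vertices of the rank-one cube is a laminate when the coefficient a = det(C₁+C₂) vanishes. -/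
open Matrix

lemma rank_le_one_of_det_eq_zero (M : Matrix (Fin 2) (Fin 2) ℝ) (h : M.det = 0) :
    M.rank ≤ 1 := by
  obtain ⟨v, hv, hMv⟩ := (Matrix.exists_mulVec_eq_zero_iff).mpr h
  have hker : 0 < Module.finrank ℝ (LinearMap.ker M.mulVecLin) := by
    rw [Module.finrank_pos_iff_exists_ne_zero]
    exact ⟨⟨v, by simpa [Matrix.mulVecLin] using hMv⟩, by simpa using hv⟩
  have hrn := LinearMap.finrank_range_add_finrank_ker M.mulVecLin
  have hdim : Module.finrank ℝ (Fin 2 → ℝ) = 2 := by simp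
  rw [hdim] at hrn
  have : M.rank = Module.finrank ℝ (LinearMap.range M.mulVecLin) := rfl
  omega

lemma split_ineq (f : Matrix (Fin 2) (Fin 2) ℝ → ℝ)
    (hf : ∀ A B : Matrix (Fin 2) (Fin 2) ℝ, B.rank ≤ 1 →
      ConvexOn ℝ Set.univ (fun t : ℝ => f (A + t • B)))
    (A B : Matrix (Fin 2) (Fin 2) ℝ) (hB : B.rank ≤ 1) :
    f A ≤ (1/2) * f (A + B) + (1/2) * f (A - B) := by
  have h := (hf A B hB).2 (Set.mem_univ (1 : ℝ)) (Set.mem_univ (-1 : ℝ))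
    (by norm_num : (0:ℝ) ≤ 1/2) (by norm_num : (0:ℝ) ≤ 1/2) (by norm_num)
  simp only [smul_eq_mul] at h
  have e0 : (1/2 : ℝ) * 1 + (1/2) * (-1) = 0 := by norm_num
  rw [e0] at h
  simpa [sub_eq_add_neg] using h

/-- If `det (C₁ + C₂) = 0` (degenerate case `a = 0`), then every symmetric
measure on the vertices of the rank-one cube is a laminate. -/
theorem symmetric_measure_is_laminate_of_degenerate
    (C₁ C₂ C₃ : Matrix (Fin 2) (Fin 2) ℝ)
    (hC₁ : C₁.rank = 1) (hC₂ : C₂.rank = 1) (hC₃ : C₃.rank = 1)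
    (ha : (C₁ + C₂).det = 0)
    (α β : ℝ) (hα : 0 ≤ α) (hβ : 0 ≤ β) (hsum : α + β = 1/4)
    (f : Matrix (Fin 2) (Fin 2) ℝ → ℝ)
    (hf : ∀ A B : Matrix (Fin 2) (Fin 2) ℝ, B.rank ≤ 1 →
      ConvexOn ℝ Set.univ (fun t : ℝ => f (A + t • B))) :
    f 0 ≤ α * (f (C₁ + C₂ + C₃) + f (C₁ - C₂ - C₃) + f (-C₁ + C₂ - C₃)
                 + f (-C₁ - C₂ + C₃))
        + β * (f (-C₁ - C₂ - C₃) + f (C₁ + C₂ - C₃) + f (C₁ - C₂ + C₃)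
                 + f (-C₁ + C₂ + C₃)) := by
  -- det C₁ = det C₂ = 0 since rank one
  have hd1 : C₁.det = 0 := by
    by_contra h
    have := Matrix.rank_of_isUnit C₁ (by
      apply (Matrix.isUnit_iff_isUnit_det C₁).mpr
      exact isUnit_iff_ne_zero.mpr h)
    simp [Fintype.card_fin] at this
    omega
  have hd2 : C₂.det = 0 := by
    by_contra h
    have := Matrix.rank_of_isUnit C₂ (by
      apply (Matrix.isUnit_iff_isUnit_det C₂).mpr
      exact isUnit_iff_ne_zero.mpr h)
    simp [Fintype.card_fin] at this
    omega
  -- det (C₁ - C₂) = 0 by the parallelogram identity for det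
  have ha' : (C₁ - C₂).det = 0 := by
    have hpar : (C₁ + C₂).det + (C₁ - C₂).det = 2 * C₁.det + 2 * C₂.det := by
      simp [Matrix.det_fin_two, Matrix.add_apply, Matrix.sub_apply]
      ring
    rw [ha, hd1, hd2] at hpar
    linarith
  have hrp : (C₁ + C₂).rank ≤ 1 := rank_le_one_of_det_eq_zero _ ha
  have hrm : (C₁ - C₂).rank ≤ 1 := rank_le_one_of_det_eq_zero _ ha'
  have hr3 : C₃.rank ≤ 1 := hC₃.le
  -- step 1 : split along C₃
  have h0 : f 0 ≤ (1/2) * f C₃ + (1/2) * f (-C₃) := by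
    have := split_ineq f hf 0 C₃ hr3
    simpa using this
  -- step 2 : split f C₃ along C₁ + C₂ and along C₁ - C₂
  have h1 : f C₃ ≤ (1/2) * f (C₁ + C₂ + C₃) + (1/2) * f (-C₁ - C₂ + C₃) := by
    have := split_ineq f hf C₃ (C₁ + C₂) hrp
    have e1 : C₃ + (C₁ + C₂) = C₁ + C₂ + C₃ := by abel
    have e2 : C₃ - (C₁ + C₂) = -C₁ - C₂ + C₃ := by abel
    rwa [e1, e2] at this
  have h2 : f C₃ ≤ (1/2) * f (C₁ - C₂ + C₃) + (1/2) * f (-C₁ + C₂ + C₃) := by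
    have := split_ineq f hf C₃ (C₁ - C₂) hrm
    have e1 : C₃ + (C₁ - C₂) = C₁ - C₂ + C₃ := by abel
    have e2 : C₃ - (C₁ - C₂) = -C₁ + C₂ + C₃ := by abel
    rwa [e1, e2] at this
  -- step 3 : split f (-C₃) along C₁ + C₂ and along C₁ - C₂
  have h3 : f (-C₃) ≤ (1/2) * f (C₁ + C₂ - C₃) + (1/2) * f (-C₁ - C₂ - C₃) := by
    have := split_ineq f hf (-C₃) (C₁ + C₂) hrp
    have e1 : -C₃ + (C₁ + C₂) = C₁ + C₂ - C₃ := by abel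
    have e2 : -C₃ - (C₁ + C₂) = -C₁ - C₂ - C₃ := by abel
    rwa [e1, e2] at this
  have h4 : f (-C₃) ≤ (1/2) * f (C₁ - C₂ - C₃) + (1/2) * f (-C₁ + C₂ - C₃) := by
    have := split_ineq f hf (-C₃) (C₁ - C₂) hrm
    have e1 : -C₃ + (C₁ - C₂) = C₁ - C₂ - C₃ := by abel
    have e2 : -C₃ - (C₁ - C₂) = -C₁ + C₂ - C₃ := by abel
    rwa [e1, e2] at this
  -- combine : f C₃ ≤ 4α (rhs1) + 4β (rhs2), etc.
  have e3 : (1/2:ℝ) = 2*α + 2*β := by linarith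
  rw [e3] at h0
  linarith [mul_le_mul_of_nonneg_left h1 (by linarith : (0:ℝ) ≤ 2*α),
    mul_le_mul_of_nonneg_left h2 (by linarith : (0:ℝ) ≤ 2*β),
    mul_le_mul_of_nonneg_left h4 (by linarith : (0:ℝ) ≤ 2*α),
    mul_le_mul_of_nonneg_left h3 (by linarith : (0:ℝ) ≤ 2*β)]
end

section
/- Let C₁, C₂, C₃ be real 2×2 matrices each of rank one, X_ε = ε₁C₁ + ε₂C₂ + ε₃C₃ for ε ∈ {−1,+1}³, and suppose a = det(C₁+C₂) > 0, b = det(C₁+C₃) > 0, c = det(C₂+C₃) > 0. Let (ν_ε) be nonnegative weights on {−1,+1}³ with Σ_ε ν_ε = 1, satisfying the barycenter condition Σ_ε ν_ε·X_ε = 0 (matrix equation) and the determinant condition Σ_ε ν_ε·det(X_ε) = 0. If ν₊₋₋ = ν₋₊₋ = ν₋₋₊, then the measure is symmetric: ν₊₊₊ = ν₊₋₋ = ν₋₊₋ = ν₋₋₊ and ν₋₋₋ = ν₊₊₋ = ν₊₋₊ = ν₋₊₊. -/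
open Matrix

lemma det_zero_of_rank_one_s14 (C : Matrix (Fin 2) (Fin 2) ℝ) (h : C.rank = 1) : C.det = 0 := by
  by_contra hd
  have : IsUnit C := (Matrix.isUnit_iff_isUnit_det C).2 (isUnit_iff_ne_zero.2 hd)
  have := Matrix.rank_of_isUnit C this
  simp [h] at this

lemma det_expand (C₁ C₂ C₃ : Matrix (Fin 2) (Fin 2) ℝ)
    (h1 : C₁.det = 0) (h2 : C₂.det = 0) (h3 : C₃.det = 0) (x y z : ℝ) :
    (x • C₁ + y • C₂ + z • C₃).det
      = x*y*(C₁+C₂).det + x*z*(C₁+C₃).det + y*z*(C₂+C₃).det := by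
  simp only [Matrix.det_fin_two, Matrix.add_apply, Matrix.smul_apply, smul_eq_mul] at *
  linear_combination (x^2 - x*y - x*z) * h1 + (y^2 - x*y - y*z) * h2 + (z^2 - x*z - y*z) * h3

/-- A measure on the vertices of the rank-one cube with barycenter `0`,
vanishing determinant moment, and equal weights on the three vertices `X₊₋₋, X₋₊₋, X₋₋₊`
is symmetric. -/
theorem measure_is_symmetric
    (C₁ C₂ C₃ : Matrix (Fin 2) (Fin 2) ℝ)
    (hC₁ : C₁.rank = 1) (hC₂ : C₂.rank = 1) (hC₃ : C₃.rank = 1)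
    (ha : 0 < (C₁ + C₂).det) (hb : 0 < (C₁ + C₃).det) (hc : 0 < (C₂ + C₃).det)
    (νppp νppm νpmp νpmm νmpp νmpm νmmp νmmm : ℝ)
    (h1 : 0 ≤ νppp) (h2 : 0 ≤ νppm) (h3 : 0 ≤ νpmp) (h4 : 0 ≤ νpmm)
    (h5 : 0 ≤ νmpp) (h6 : 0 ≤ νmpm) (h7 : 0 ≤ νmmp) (h8 : 0 ≤ νmmm)
    (hsum : νppp + νppm + νpmp + νpmm + νmpp + νmpm + νmmp + νmmm = 1)
    (hbary : νppp • (C₁ + C₂ + C₃) + νppm • (C₁ + C₂ - C₃)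
           + νpmp • (C₁ - C₂ + C₃) + νpmm • (C₁ - C₂ - C₃)
           + νmpp • (-C₁ + C₂ + C₃) + νmpm • (-C₁ + C₂ - C₃)
           + νmmp • (-C₁ - C₂ + C₃) + νmmm • (-C₁ - C₂ - C₃) = 0)
    (hdet : νppp * (C₁ + C₂ + C₃).det + νppm * (C₁ + C₂ - C₃).det
          + νpmp * (C₁ - C₂ + C₃).det + νpmm * (C₁ - C₂ - C₃).det
          + νmpp * (-C₁ + C₂ + C₃).det + νmpm * (-C₁ + C₂ - C₃).det
          + νmmp * (-C₁ - C₂ + C₃).det + νmmm * (-C₁ - C₂ - C₃).det = 0)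
    (heq1 : νpmm = νmpm) (heq2 : νmpm = νmmp) :
    (νppp = νpmm ∧ νpmm = νmpm ∧ νmpm = νmmp) ∧
    (νmmm = νppm ∧ νppm = νpmp ∧ νpmp = νmpp) := by
  have d1 := det_zero_of_rank_one_s14 C₁ hC₁
  have d2 := det_zero_of_rank_one_s14 C₂ hC₂
  have d3 := det_zero_of_rank_one_s14 C₃ hC₃
  set a := (C₁ + C₂).det with hadef
  set b := (C₁ + C₃).det with hbdef
  set c := (C₂ + C₃).det with hcdef
  set p1 := νppp + νppm + νpmp + νpmm - νmpp - νmpm - νmmp - νmmm with hp1def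
  set p2 := νppp + νppm - νpmp - νpmm + νmpp + νmpm - νmmp - νmmm with hp2def
  set p3 := νppp - νppm + νpmp - νpmm + νmpp - νmpm + νmmp - νmmm with hp3def
  have hM : p1 • C₁ + p2 • C₂ + p3 • C₃ = 0 := by
    rw [hp1def, hp2def, hp3def]
    linear_combination (norm := module) hbary
  have hE0 : p1*p2*a + p1*p3*b + p2*p3*c = 0 := by
    have h := det_expand C₁ C₂ C₃ d1 d2 d3 p1 p2 p3
    rw [hM] at h
    simpa [hadef, hbdef, hcdef] using h.symm
  have hE1 : (p1+1)*p2*a + (p1+1)*p3*b + p2*p3*c = 0 := by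
    have h := det_expand C₁ C₂ C₃ d1 d2 d3 (p1+1) p2 p3
    have e : (p1+1) • C₁ + p2 • C₂ + p3 • C₃ = (p1 • C₁ + p2 • C₂ + p3 • C₃) + C₁ := by
      module
    rw [e, hM, zero_add, d1] at h
    linarith [h]
  have hE2 : p1*(p2+1)*a + p1*p3*b + (p2+1)*p3*c = 0 := by
    have h := det_expand C₁ C₂ C₃ d1 d2 d3 p1 (p2+1) p3
    have e : p1 • C₁ + (p2+1) • C₂ + p3 • C₃ = (p1 • C₁ + p2 • C₂ + p3 • C₃) + C₂ := by
      module
    rw [e, hM, zero_add, d2] at h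
    linarith [h]
  have hE3 : p1*p2*a + p1*(p3+1)*b + p2*(p3+1)*c = 0 := by
    have h := det_expand C₁ C₂ C₃ d1 d2 d3 p1 p2 (p3+1)
    have e : p1 • C₁ + p2 • C₂ + (p3+1) • C₃ = (p1 • C₁ + p2 • C₂ + p3 • C₃) + C₃ := by
      module
    rw [e, hM, zero_add, d3] at h
    linarith [h]
  have hA : a*p2 + b*p3 = 0 := by linear_combination hE1 - hE0
  have hB : a*p1 + c*p3 = 0 := by linear_combination hE2 - hE0
  have hC : b*p1 + c*p2 = 0 := by linear_combination hE3 - hE0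
  have h2bc : (2*(b*c)) * p3 = 0 := by linear_combination b*hB + c*hA - a*hC
  have hp3 : p3 = 0 := by
    have hbc : (2*(b*c)) ≠ 0 := by positivity
    exact (mul_eq_zero.mp h2bc).resolve_left hbc
  have hp2 : p2 = 0 := by
    have : a * p2 = 0 := by rw [hp3] at hA; linarith
    exact (mul_eq_zero.mp this).resolve_left (ne_of_gt ha)
  have hp1 : p1 = 0 := by
    have : a * p1 = 0 := by rw [hp3] at hB; linarith
    exact (mul_eq_zero.mp this).resolve_left (ne_of_gt ha)
  -- rewrite the determinant moment
  have r1 : (C₁ + C₂ + C₃).det = a + b + c := by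
    have e : C₁ + C₂ + C₃ = (1:ℝ) • C₁ + (1:ℝ) • C₂ + (1:ℝ) • C₃ := by module
    rw [e, det_expand C₁ C₂ C₃ d1 d2 d3]; ring
  have r2 : (C₁ + C₂ - C₃).det = a - b - c := by
    have e : C₁ + C₂ - C₃ = (1:ℝ) • C₁ + (1:ℝ) • C₂ + (-1:ℝ) • C₃ := by module
    rw [e, det_expand C₁ C₂ C₃ d1 d2 d3]; ring
  have r3 : (C₁ - C₂ + C₃).det = -a + b - c := by
    have e : C₁ - C₂ + C₃ = (1:ℝ) • C₁ + (-1:ℝ) • C₂ + (1:ℝ) • C₃ := by module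
    rw [e, det_expand C₁ C₂ C₃ d1 d2 d3]; ring
  have r4 : (C₁ - C₂ - C₃).det = -a - b + c := by
    have e : C₁ - C₂ - C₃ = (1:ℝ) • C₁ + (-1:ℝ) • C₂ + (-1:ℝ) • C₃ := by module
    rw [e, det_expand C₁ C₂ C₃ d1 d2 d3]; ring
  have r5 : (-C₁ + C₂ + C₃).det = -a - b + c := by
    have e : -C₁ + C₂ + C₃ = (-1:ℝ) • C₁ + (1:ℝ) • C₂ + (1:ℝ) • C₃ := by module
    rw [e, det_expand C₁ C₂ C₃ d1 d2 d3]; ring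
  have r6 : (-C₁ + C₂ - C₃).det = -a + b - c := by
    have e : -C₁ + C₂ - C₃ = (-1:ℝ) • C₁ + (1:ℝ) • C₂ + (-1:ℝ) • C₃ := by module
    rw [e, det_expand C₁ C₂ C₃ d1 d2 d3]; ring
  have r7 : (-C₁ - C₂ + C₃).det = a - b - c := by
    have e : -C₁ - C₂ + C₃ = (-1:ℝ) • C₁ + (-1:ℝ) • C₂ + (1:ℝ) • C₃ := by module
    rw [e, det_expand C₁ C₂ C₃ d1 d2 d3]; ring
  have r8 : (-C₁ - C₂ - C₃).det = a + b + c := by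
    have e : -C₁ - C₂ - C₃ = (-1:ℝ) • C₁ + (-1:ℝ) • C₂ + (-1:ℝ) • C₃ := by module
    rw [e, det_expand C₁ C₂ C₃ d1 d2 d3]; ring
  rw [r1, r2, r3, r4, r5, r6, r7, r8] at hdet
  -- linear consequences of the barycenter condition
  have hp1' : νppp + νppm + νpmp + νpmm - νmpp - νmpm - νmmp - νmmm = 0 := hp1
  have hp2' : νppp + νppm - νpmp - νpmm + νmpp + νmpm - νmmp - νmmm = 0 := hp2
  have hp3' : νppp - νppm + νpmp - νpmm + νmpp - νmpm + νmmp - νmmm = 0 := hp3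
  have eB1 : νppm = νmpp := by linarith
  have eB2 : νpmp = νmpp := by linarith
  have hS : (a + b + c) * (νppp + νmmm - νmpp - νmpm) = 0 := by
    linear_combination hdet + (b + c - a) * eB1 + (a - b + c) * eB2
      + (a + b - c) * heq1 + (a - b - c) * heq2
  have habc : (a + b + c) ≠ 0 := by positivity
  have hS0 : νppp + νmmm - νmpp - νmpm = 0 := (mul_eq_zero.mp hS).resolve_left habc
  refine ⟨⟨by linarith, heq1, heq2⟩, by linarith, by linarith, by linarith⟩
end
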